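/- Let d be a natural number, let μ ∈ EuclideanSpace ℝ (Fin d), let S be a positive semidefinite symmetric d × d real matrix, and let A be a d × d real orthogonal matrix regarded as a linear map on EuclideanSpace ℝ (Fin d). If the pushforward of the multivariate Gaussian measure with mean μ and covariance S under x ↦ A • x equals the multivariate Gaussian measure with mean μ and covariance S, then A • μ = μ and A * S * Aᵀ = S. -/

import Mathlib

/-! The measure `multivariateGaussian μ S hS` is `ProbabilityTheory.multivariateGaussian μ S`,
because the spectral square root in its definition is `CFC.sqrt S`. The image of that Gaussian
measure under `x ↦ A x` is the Gaussian measure with mean `A μ` and covariance `A S Aᵀ`, and a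
Gaussian measure determines its mean and covariance matrix. -/

open MeasureTheory ProbabilityTheory Matrix

/-- The multivariate Gaussian measure on `EuclideanSpace ℝ (Fin d)` with mean `μ` and positive
semidefinite covariance matrix `S`: the pushforward of a standard i.i.d. Gaussian vector under
`x ↦ μ + √S x`.  Its characteristic function at `t` is `exp (i⟪t, μ⟫ - ⟪t, S t⟫ / 2)`. -/
noncomputable def multivariateGaussian {d : ℕ} (μ : EuclideanSpace ℝ (Fin d))
    (S : Matrix (Fin d) (Fin d) ℝ) (hS : S.PosSemidef) :
    Measure (EuclideanSpace ℝ (Fin d)) :=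
  Measure.map
    (fun x => μ + (WithLp.equiv 2 (Fin d → ℝ)).symm ((hS.1.eigenvectorUnitary.1 * diagonal (Real.sqrt ∘ hS.1.eigenvalues) *
      (star hS.1.eigenvectorUnitary : Matrix (Fin d) (Fin d) ℝ)).mulVec (WithLp.equiv 2 (Fin d → ℝ) x)))
    (Measure.map (WithLp.equiv 2 (Fin d → ℝ)).symm (Measure.pi fun _ : Fin d => gaussianReal 0 1))

open scoped MatrixOrder

lemma Matrix.PosSemidef.mul_mul_transpose_same {m n R : Type*} [Fintype n] [Finite m] [Ring R]
    [PartialOrder R] [StarRing R] [TrivialStar R] {S : Matrix n n R} (hS : S.PosSemidef)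
    (A : Matrix m n R) : (A * S * Aᵀ).PosSemidef := by
  simpa using hS.mul_mul_conjTranspose_same A

lemma Matrix.PosSemidef.eigenvectorUnitary_mul_diagonal_sqrt_mul_star {n : Type*} [Fintype n]
    [DecidableEq n] {S : Matrix n n ℝ} (hS : S.PosSemidef) :
    hS.1.eigenvectorUnitary.1 * diagonal (Real.sqrt ∘ hS.1.eigenvalues) *
      (star hS.1.eigenvectorUnitary : Matrix n n ℝ) = CFC.sqrt S := by
  rw [CFC.sqrt_eq_cfc, cfc_nnreal_eq_real _ S hS.nonneg, hS.1.cfc_eq, IsHermitian.cfc]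
  simp [Function.comp_def, hS.eigenvalues_nonneg]

namespace ProbabilityTheory

variable {ι : Type*} [Fintype ι] [DecidableEq ι]

lemma multivariateGaussian_inj {μ μ' : EuclideanSpace ℝ ι} {S S' : Matrix ι ι ℝ}
    (hS : S.PosSemidef) (hS' : S'.PosSemidef) :
    multivariateGaussian μ S = multivariateGaussian μ' S' ↔ μ = μ' ∧ S = S' := by
  refine ⟨fun h ↦ ⟨?_, ?_⟩, fun ⟨hμ, hS⟩ ↦ hμ ▸ hS ▸ rfl⟩
  · simpa using congrArg (fun ν ↦ ∫ x, x ∂ν) h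
  · ext i j
    have := congrArg (fun ν ↦ covarianceBilin ν (EuclideanSpace.single i 1)
      (EuclideanSpace.single j 1)) h
    simpa [covarianceBilin_multivariateGaussian hS, covarianceBilin_multivariateGaussian hS']
      using this

lemma multivariateGaussian_map_toEuclideanCLM (μ : EuclideanSpace ℝ ι) {S : Matrix ι ι ℝ}
    (hS : S.PosSemidef) (A : Matrix ι ι ℝ) :
    (multivariateGaussian μ S).map (toEuclideanCLM (𝕜 := ℝ) A) =
      multivariateGaussian (toEuclideanCLM (𝕜 := ℝ) A μ) (A * S * Aᵀ) := by
  apply IsGaussian.ext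
  · simp [ContinuousLinearMap.integral_id_map IsGaussian.integrable_id]
  · ext x y
    rw [covarianceBilin_map IsGaussian.memLp_two_id, covarianceBilin_multivariateGaussian hS,
      covarianceBilin_multivariateGaussian (hS.mul_mul_transpose_same A),
      ← ContinuousLinearMap.star_eq_adjoint, ← map_star]
    simp only [ofLp_toEuclideanCLM, star_eq_conjTranspose, conjTranspose_eq_transpose_of_trivial]
    rw [← mulVec_mulVec, ← mulVec_mulVec, dotProduct_mulVec x.ofLp, mulVec_transpose]

end ProbabilityTheory

lemma multivariateGaussian_eq {d : ℕ} (μ : EuclideanSpace ℝ (Fin d))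
    (S : Matrix (Fin d) (Fin d) ℝ) (hS : S.PosSemidef) :
    multivariateGaussian μ S hS = ProbabilityTheory.multivariateGaussian μ S := by
  rw [_root_.multivariateGaussian, hS.eigenvectorUnitary_mul_diagonal_sqrt_mul_star]
  congr 1
  exact map_pi_eq_stdGaussian

theorem multivariateGaussian_map_invariant_necessary_general (d : ℕ) (μ : EuclideanSpace ℝ (Fin d))
    (S : Matrix (Fin d) (Fin d) ℝ) (hS : S.PosSemidef)
    (A : Matrix (Fin d) (Fin d) ℝ)
    (hmap : Measure.map
      (fun x : EuclideanSpace ℝ (Fin d) =>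
        (WithLp.equiv 2 (Fin d → ℝ)).symm (A.mulVec (WithLp.equiv 2 (Fin d → ℝ) x)))
      (multivariateGaussian μ S hS) = multivariateGaussian μ S hS) :
    (WithLp.equiv 2 (Fin d → ℝ)).symm (A.mulVec (WithLp.equiv 2 (Fin d → ℝ) μ)) = μ ∧
      A * S * Aᵀ = S := by
  rwa [show (fun x => (WithLp.equiv 2 _).symm (A *ᵥ WithLp.equiv 2 _ x)) =
      ⇑(toEuclideanCLM (𝕜 := ℝ) A) from rfl, multivariateGaussian_eq,
    multivariateGaussian_map_toEuclideanCLM μ hS,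
    multivariateGaussian_inj (hS.mul_mul_transpose_same A) hS] at hmap

/-- If the multivariate Gaussian measure with mean `μ` and covariance `S` is
invariant under the orthogonal linear map `x ↦ A x`, then `A μ = μ` and `A S Aᵀ = S`. -/
theorem multivariateGaussian_map_invariant_necessary (d : ℕ) (μ : EuclideanSpace ℝ (Fin d))
    (S : Matrix (Fin d) (Fin d) ℝ) (hS : S.PosSemidef) (hSsymm : S.IsSymm)
    (A : Matrix (Fin d) (Fin d) ℝ) (hA : A ∈ Matrix.orthogonalGroup (Fin d) ℝ)
    (hmap : Measure.map
      (fun x : EuclideanSpace ℝ (Fin d) =>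
        (WithLp.equiv 2 (Fin d → ℝ)).symm (A.mulVec (WithLp.equiv 2 (Fin d → ℝ) x)))
      (multivariateGaussian μ S hS) = multivariateGaussian μ S hS) :
    (WithLp.equiv 2 (Fin d → ℝ)).symm (A.mulVec (WithLp.equiv 2 (Fin d → ℝ) μ)) = μ ∧
      A * S * Aᵀ = S :=
  multivariateGaussian_map_invariant_necessary_general d μ S hS A hmap
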